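/- Let γ ∈ SL(2,ℤ) be of infinite order (γ^n ≠ 1 for all n ≥ 1), let k ≥ 1 satisfy det(1 - γ^k) ≠ 0, and let p be an integer with 1 ≤ p < k. Then the number of fixed points of multiplication by γ^p on Q_k(γ) = coker(1 - γ^k) equals |det(1 - γ^{gcd(k,p)})| = |tr(γ^{gcd(k,p)}) - 2|. -/

import Mathlib

/-!
The fixed points of `γ^p` on the finite group `Q_k(γ)` form the kernel of `1 - γ^p`, so there
are as many of them as elements in its cokernel `ℤ² / ((1 - γ^k)ℤ² + (1 - γ^p)ℤ²)`.
For any subgroup `T`, the exponents `n` with `(1 - γ^n)ℤ² ⊆ T` form a subgroup of `ℤ`;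
hence `(1 - γ^k)ℤ² + (1 - γ^p)ℤ² = (1 - γ^d)ℤ²` with `d = gcd(k, p)`, a lattice of index
`|det(1 - γ^d)|`. This determinant is nonzero because it divides `det(1 - γ^k)`, and
`det(1 - B) = 2 - tr B` for `B ∈ SL(2, ℤ)`.
-/

/-- `Q_k(γ) = coker(1 - γ^k)`, the cokernel of `1 - γ^k` acting on `Fin 2 → ℤ`. -/
abbrev Qk (γ : Matrix.SpecialLinearGroup (Fin 2) ℤ) (k : ℕ) :=
  (Fin 2 → ℤ) ⧸ LinearMap.range (Matrix.toLin'
    (1 - ((γ ^ k : Matrix.SpecialLinearGroup (Fin 2) ℤ) : Matrix (Fin 2) (Fin 2) ℤ)))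

open LinearMap

namespace LinearMap

section

variable {R M : Type*} [Ring R] [AddCommGroup M] [Module R M]

theorem natCard_ker_eq_natCard_quotient_range [Finite M] (f : M →ₗ[R] M) :
    Nat.card (ker f) = Nat.card (M ⧸ range f) :=
  (AddSubgroup.index_range (f := f.toAddMonoidHom)).symm

theorem natCard_fixed_eq_natCard_quotient_range_one_sub [Finite M] (f : M →ₗ[R] M) :
    Nat.card {x // f x = x} = Nat.card (M ⧸ range (1 - f)) := by
  rw [← natCard_ker_eq_natCard_quotient_range]
  exact Nat.card_congr (Equiv.subtypeEquivRight fun x => by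
    rw [mem_ker, sub_apply, Module.End.one_apply, sub_eq_zero, eq_comm])

theorem range_eq_map_mkQ {N : Submodule R M} {f : M →ₗ[R] M} {g : (M ⧸ N) →ₗ[R] M ⧸ N}
    (h : ∀ v, g (N.mkQ v) = N.mkQ (f v)) : range g = (range f).map N.mkQ := by
  rw [← range_comp, ← range_comp_of_range_eq_top g N.range_mkQ]
  exact congrArg range (LinearMap.ext h)

end

theorem natCard_quotient_range_eq_natAbs_det {E : Type*} [AddCommGroup E] [Module.Free ℤ E]
    [Module.Finite ℤ E] (f : E →ₗ[ℤ] E) (hf : LinearMap.det f ≠ 0) :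
    Nat.card (E ⧸ range f) = (LinearMap.det f).natAbs := by
  have hinj : Function.Injective f :=
    ker_eq_bot.mp (not_ne_iff.mp (mt det_eq_zero_iff_ker_ne_bot.mpr hf))
  rw [← (range f).natAbs_det_equiv (LinearEquiv.ofInjective f hinj)]
  rfl

end LinearMap

namespace Matrix

theorem det_one_sub_ne_zero_of_pow {n R : Type*} [Fintype n] [DecidableEq n] [CommRing R]
    (A : Matrix n n R) (m : ℕ) (h : (1 - A ^ m).det ≠ 0) : (1 - A).det ≠ 0 := by
  rw [← mul_neg_geom_sum, det_mul] at h
  exact left_ne_zero_of_mul h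

theorem det_one_sub_fin_two {R : Type*} [CommRing R] (A : Matrix (Fin 2) (Fin 2) R) :
    (1 - A).det = 1 - A.trace + A.det := by
  simp only [det_fin_two, trace_fin_two, sub_apply, one_apply_eq, ne_eq, zero_ne_one, one_ne_zero,
    not_false_eq_true, one_apply_ne]
  ring

noncomputable def SpecialLinearGroup.stdRepresentation (n R : Type*) [Fintype n] [DecidableEq n]
    [CommRing R] : Representation R (SpecialLinearGroup n R) (n → R) :=
  LinearEquiv.automorphismGroup.toLinearMapMonoidHom.comp SpecialLinearGroup.toLin'

theorem SpecialLinearGroup.stdRepresentation_apply {n R : Type*} [Fintype n] [DecidableEq n]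
    [CommRing R] (A : SpecialLinearGroup n R) :
    stdRepresentation n R A = Matrix.toLin' (A : Matrix n n R) :=
  rfl

end Matrix

namespace Representation

variable {R G M : Type*} [CommRing R] [Group G] [AddCommGroup M] [Module R M]
  (ρ : Representation R G M) (g : G)

def trivialExponents (T : Submodule R M) : AddSubgroup ℤ where
  carrier := {n | ∀ v, v - ρ (g ^ n) v ∈ T}
  zero_mem' := by simp
  add_mem' {a b} ha hb v := by
    have hsplit : v - ρ (g ^ (a + b)) v =
        (v - ρ (g ^ b) v) + (ρ (g ^ b) v - ρ (g ^ a) (ρ (g ^ b) v)) := by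
      rw [zpow_add, map_mul, Module.End.mul_apply]
      abel
    exact hsplit ▸ T.add_mem (hb v) (ha _)
  neg_mem' {a} ha v := by
    have hsplit : v - ρ (g ^ (-a)) v = -(ρ (g ^ (-a)) v - ρ (g ^ a) (ρ (g ^ (-a)) v)) := by
      rw [← Module.End.mul_apply, ← map_mul, ← zpow_add, add_neg_cancel, zpow_zero, map_one,
        Module.End.one_apply]
      abel
    exact hsplit ▸ T.neg_mem (ha _)

variable {ρ g}

theorem natCast_mem_trivialExponents {T : Submodule R M} {n : ℕ} :
    (n : ℤ) ∈ ρ.trivialExponents g T ↔ range (1 - ρ (g ^ n)) ≤ T := by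
  simp [trivialExponents, SetLike.le_def]

theorem range_one_sub_pow_le_of_dvd {m n : ℕ} (h : m ∣ n) :
    range (1 - ρ (g ^ n)) ≤ range (1 - ρ (g ^ m)) := by
  obtain ⟨c, rfl⟩ := h
  rw [← natCast_mem_trivialExponents, Nat.cast_mul, mul_comm, ← smul_eq_mul]
  exact zsmul_mem (natCast_mem_trivialExponents.mpr le_rfl) _

theorem range_one_sub_pow_gcd_le {T : Submodule R M} {k p : ℕ} (hk : range (1 - ρ (g ^ k)) ≤ T)
    (hp : range (1 - ρ (g ^ p)) ≤ T) : range (1 - ρ (g ^ Nat.gcd k p)) ≤ T := by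
  rw [← natCast_mem_trivialExponents] at hk hp ⊢
  rw [Nat.gcd_eq_gcd_ab, mul_comm (k : ℤ), mul_comm (p : ℤ), ← smul_eq_mul, ← smul_eq_mul]
  exact add_mem (zsmul_mem hk _) (zsmul_mem hp _)

variable (ρ g)

theorem sup_range_one_sub_pow (k p : ℕ) :
    range (1 - ρ (g ^ k)) ⊔ range (1 - ρ (g ^ p)) = range (1 - ρ (g ^ Nat.gcd k p)) :=
  le_antisymm
    (sup_le (range_one_sub_pow_le_of_dvd (Nat.gcd_dvd_left k p))
      (range_one_sub_pow_le_of_dvd (Nat.gcd_dvd_right k p)))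
    (range_one_sub_pow_gcd_le le_sup_left le_sup_right)

end Representation

theorem stmt6_general (γ : Matrix.SpecialLinearGroup (Fin 2) ℤ)
    (k p : ℕ)
    (hdet : (1 - ((γ ^ k : Matrix.SpecialLinearGroup (Fin 2) ℤ) :
        Matrix (Fin 2) (Fin 2) ℤ)).det ≠ 0)
    (g : Module.End ℤ (Qk γ k))
    (hg : ∀ v : Fin 2 → ℤ, g (Submodule.Quotient.mk v) =
      Submodule.Quotient.mk (Matrix.mulVec
        ((γ ^ p : Matrix.SpecialLinearGroup (Fin 2) ℤ) : Matrix (Fin 2) (Fin 2) ℤ) v)) :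
    Nat.card {x : Qk γ k // g x = x} =
        ((1 - ((γ ^ (Nat.gcd k p) : Matrix.SpecialLinearGroup (Fin 2) ℤ) :
          Matrix (Fin 2) (Fin 2) ℤ)).det).natAbs ∧
      ((1 - ((γ ^ (Nat.gcd k p) : Matrix.SpecialLinearGroup (Fin 2) ℤ) :
          Matrix (Fin 2) (Fin 2) ℤ)).det).natAbs =
        (Matrix.trace ((γ ^ (Nat.gcd k p) : Matrix.SpecialLinearGroup (Fin 2) ℤ) :
          Matrix (Fin 2) (Fin 2) ℤ) - 2).natAbs := by
  set ρ := Matrix.SpecialLinearGroup.stdRepresentation (Fin 2) ℤ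
  set d := Nat.gcd k p
  have hρ (n : ℕ) : Matrix.toLin' (1 - ((γ ^ n : Matrix.SpecialLinearGroup (Fin 2) ℤ) :
      Matrix (Fin 2) (Fin 2) ℤ)) = 1 - ρ (γ ^ n) := by
    rw [map_sub, Matrix.toLin'_one, Matrix.SpecialLinearGroup.stdRepresentation_apply,
      Module.End.one_eq_id]
  have hdet_d : (1 - ((γ ^ d : Matrix.SpecialLinearGroup (Fin 2) ℤ) :
      Matrix (Fin 2) (Fin 2) ℤ)).det ≠ 0 :=
    Matrix.det_one_sub_ne_zero_of_pow _ (k / d) (by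
      rwa [← Matrix.SpecialLinearGroup.coe_pow, ← pow_mul,
        Nat.mul_div_cancel' (Nat.gcd_dvd_left k p)])
  have : Finite (Qk γ k) := Nat.finite_of_card_ne_zero (by
    rw [natCard_quotient_range_eq_natAbs_det _ (by rwa [det_toLin']), det_toLin']
    exact Int.natAbs_ne_zero.mpr hdet)
  refine ⟨?_, by rw [Matrix.det_one_sub_fin_two, (γ ^ d).det_coe]; omega⟩
  have hrange : range (1 - g) = (range (1 - ρ (γ ^ p))).map (Submodule.mkQ _) :=
    range_eq_map_mkQ fun v => by
      simp only [LinearMap.sub_apply, Module.End.one_apply, Submodule.mkQ_apply, hg]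
      rfl
  calc Nat.card {x : Qk γ k // g x = x}
      = Nat.card (Qk γ k ⧸ range (1 - g)) := natCard_fixed_eq_natCard_quotient_range_one_sub g
    _ = Nat.card ((Fin 2 → ℤ) ⧸ range (Matrix.toLin' (1 - ((γ ^ k :
          Matrix.SpecialLinearGroup (Fin 2) ℤ) : Matrix (Fin 2) (Fin 2) ℤ))) ⊔
          range (1 - ρ (γ ^ p))) := by
      rw [hrange]
      exact Nat.card_congr (Submodule.quotientQuotientEquivQuotientSup _ _).toEquiv
    _ = Nat.card ((Fin 2 → ℤ) ⧸ range (Matrix.toLin' (1 - ((γ ^ d :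
          Matrix.SpecialLinearGroup (Fin 2) ℤ) : Matrix (Fin 2) (Fin 2) ℤ)))) := by
      rw [hρ k, Representation.sup_range_one_sub_pow, hρ d]
    _ = _ := by rw [natCard_quotient_range_eq_natAbs_det _ (by rwa [det_toLin']), det_toLin']

/-- if `γ ∈ SL(2,ℤ)` has infinite order, `det(1 - γ^k) ≠ 0` and `1 ≤ p < k`,
then the number of fixed points of multiplication by `γ^p` on `Q_k(γ)` equals
`|det(1 - γ^{gcd(k,p)})| = |tr(γ^{gcd(k,p)}) - 2|`. -/
theorem stmt6 (γ : Matrix.SpecialLinearGroup (Fin 2) ℤ)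
    (hord : ∀ n : ℕ, 1 ≤ n → γ ^ n ≠ 1)
    (k p : ℕ) (hk : 1 ≤ k)
    (hdet : (1 - ((γ ^ k : Matrix.SpecialLinearGroup (Fin 2) ℤ) :
        Matrix (Fin 2) (Fin 2) ℤ)).det ≠ 0)
    (hp : 1 ≤ p) (hpk : p < k)
    (g : Module.End ℤ (Qk γ k))
    (hg : ∀ v : Fin 2 → ℤ, g (Submodule.Quotient.mk v) =
      Submodule.Quotient.mk (Matrix.mulVec
        ((γ ^ p : Matrix.SpecialLinearGroup (Fin 2) ℤ) : Matrix (Fin 2) (Fin 2) ℤ) v)) :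
    Nat.card {x : Qk γ k // g x = x} =
        ((1 - ((γ ^ (Nat.gcd k p) : Matrix.SpecialLinearGroup (Fin 2) ℤ) :
          Matrix (Fin 2) (Fin 2) ℤ)).det).natAbs ∧
      ((1 - ((γ ^ (Nat.gcd k p) : Matrix.SpecialLinearGroup (Fin 2) ℤ) :
          Matrix (Fin 2) (Fin 2) ℤ)).det).natAbs =
        (Matrix.trace ((γ ^ (Nat.gcd k p) : Matrix.SpecialLinearGroup (Fin 2) ℤ) :
          Matrix (Fin 2) (Fin 2) ℤ) - 2).natAbs :=
  stmt6_general γ k p hdet g hg
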